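/- For every d ≥ 5, the set of points x ∈ S^{d-1} forming at most 2 distinct dot products with the points of the d-demicube ω̄^d is exactly the cross-polytope ω*_{2d} = {±e_1, ..., ±e_d}; that is, D_2(ω̄^d) = ω*_{2d}. -/

import Mathlib

open MeasureTheory Metric
open scoped RealInnerProductSpace

noncomputable section

/-- `E n` is the Euclidean space `ℝ^n`; the unit sphere `S^{n-1}` is `Metric.sphere (0 : E n) 1`. -/
abbrev E (n : ℕ) : Type := EuclideanSpace ℝ (Fin n)

/-- `Dm n m X` is the set of points `z` of the unit sphere of `ℝ^n` forming at most `m`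
distinct dot products with the points of `X`. -/
def Dm (n m : ℕ) (X : Set (E n)) : Set (E n) :=
  {z | z ∈ sphere (0 : E n) 1 ∧ ∃ T : Finset ℝ, T.card ≤ m ∧ ∀ x ∈ X, ⟪z, x⟫ ∈ T}

/-- The `d`-demicube: the `2^(d-1)` points `(±1/√d, …, ±1/√d)` of `S^{d-1} ⊂ ℝ^d` having an
even number of minus signs. -/
noncomputable def demicube (d : ℕ) : Finset (E d) :=
  letI : DecidableEq (E d) := Classical.decEq _
  ((Finset.univ : Finset (Fin d → Bool)).filter fun ε =>
      Even (Finset.univ.filter fun i => ε i = true).card).image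
    (fun ε => (WithLp.toLp 2 (fun i => if ε i then -(1 / Real.sqrt d) else 1 / Real.sqrt d) : E d))

/-- The vertex set `{±e_1, …, ±e_d}` of the regular cross-polytope inscribed in `S^{d-1}`. -/
def crossPolytope (d : ℕ) : Set (E d) :=
  {x | ∃ i : Fin d, x = EuclideanSpace.single i (1 : ℝ) ∨ x = -EuclideanSpace.single i (1 : ℝ)}

/-! The demicube point with minus signs on an even set `S` has inner product
`(∑ i, z i - 2 * ∑ i ∈ S, z i) / √d` with `z`, so for `z ∈ D₂` the sums of `z` over even sets take
at most two values, one of them `0` (from `S = ∅`). For disjoint pairs `{a, b}`, `{c, e}` one of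
`z a + z b`, `z c + z e` must then vanish, and with five coordinates available this forces all but
one coordinate of `z` to vanish; `‖z‖ = 1` gives `z = ±eᵢ`. Conversely `⟪±eᵢ, x⟫ = ±xᵢ = ±1/√d`
for every demicube point `x`. -/

lemma eq_or_eq_or_eq_of_card_le_two {α : Type*} [DecidableEq α] {U : Finset α} (hU : U.card ≤ 2)
    {a b c : α} (ha : a ∈ U) (hb : b ∈ U) (hc : c ∈ U) : a = b ∨ a = c ∨ b = c := by
  by_contra! h
  obtain ⟨hab, hac, hbc⟩ := h
  have h3 : ({a, b, c} : Finset α).card = 3 :=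
    Finset.card_eq_three.mpr ⟨a, b, c, hab, hac, hbc, rfl⟩
  have := Finset.card_le_card (show {a, b, c} ⊆ U by simp [Finset.insert_subset_iff, *])
  omega

section PairSums

variable {ι : Type*} {z : ι → ℝ}

def DisjointPairSumsVanish (z : ι → ℝ) : Prop :=
  ∀ a b c e : ι, a ≠ b → a ≠ c → a ≠ e → b ≠ c → b ≠ e → c ≠ e → z a + z b = 0 ∨ z c + z e = 0

/-- If `z a + z b = z c + z e = s`, the sums `0`, `s`, `2 * s` over `∅`, `{a, b}`,
`{a, b, c, e}` lie in `U`, which forces `s = 0`. -/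
lemma disjointPairSumsVanish_of_evenSums [DecidableEq ι] {U : Finset ℝ} (hU : U.card ≤ 2)
    (hz : ∀ S : Finset ι, Even S.card → ∑ i ∈ S, z i ∈ U) : DisjointPairSumsVanish z := by
  intro a b c e hab hac hae hbc hbe hce
  have h0 : (0 : ℝ) ∈ U := by simpa using hz ∅ (by simp)
  have h1 : z a + z b ∈ U := by simpa [hab] using hz {a, b} (by simp [hab])
  have h2 : z c + z e ∈ U := by simpa [hce] using hz {c, e} (by simp [hce])
  have h12 : z a + z b + (z c + z e) ∈ U := by
    simpa [*, add_assoc] using hz {a, b, c, e} (by simp [*]; decide)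
  rcases eq_or_eq_or_eq_of_card_le_two hU h0 h1 h2 with h | h | h
  · exact .inl h.symm
  · exact .inr h.symm
  · rcases eq_or_eq_or_eq_of_card_le_two hU h0 h1 h12 with h' | h' | h' <;>
      left <;> linarith

/-- The three pairs among `c, e, f` are disjoint from `{a, b}`, so their sums vanish. -/
lemma DisjointPairSumsVanish.eq_zero_of_add_ne_zero (hz : DisjointPairSumsVanish z)
    {a b c e f : ι} (hab : a ≠ b) (hac : a ≠ c) (hae : a ≠ e) (haf : a ≠ f) (hbc : b ≠ c)
    (hbe : b ≠ e) (hbf : b ≠ f) (hce : c ≠ e) (hcf : c ≠ f) (hef : e ≠ f) (h : z a + z b ≠ 0) : z c = 0 := by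
  have hce0 := (hz a b c e hab hac hae hbc hbe hce).resolve_left h
  have hcf0 := (hz a b c f hab hac haf hbc hbf hcf).resolve_left h
  have hef0 := (hz a b e f hab hae haf hbe hbf hef).resolve_left h
  linarith

lemma DisjointPairSumsVanish.eq_zero_or_eq_zero_of_five (hz : DisjointPairSumsVanish z)
    {i j k l m : ι} (hij : i ≠ j) (hik : i ≠ k) (hil : i ≠ l) (him : i ≠ m) (hjk : j ≠ k)
    (hjl : j ≠ l) (hjm : j ≠ m) (hkl : k ≠ l) (hkm : k ≠ m) (hlm : l ≠ m) : z i = 0 ∨ z j = 0 := by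
  by_contra! h
  obtain ⟨hi, hj⟩ := h
  by_cases hij0 : z i + z j = 0
  · by_cases hik0 : z i + z k = 0
    · have hjk0 : z j + z k ≠ 0 := fun h ↦ hi (by linarith)
      exact hi (hz.eq_zero_of_add_ne_zero hjk hij.symm hjl hjm hik.symm hkl hkm hil him hlm hjk0)
    · exact hj (hz.eq_zero_of_add_ne_zero hik hij hil him hjk.symm hkl hkm hjl hjm hlm hik0)
  · have hk := hz.eq_zero_of_add_ne_zero hij hik hil him hjk hjl hjm hkl hkm hlm hij0
    exact hj (hz.eq_zero_of_add_ne_zero hik hij hil him hjk.symm hkl hkm hjl hjm hlm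
      (by simpa [hk] using hi))

lemma DisjointPairSumsVanish.eq_zero_or_eq_zero_of_ne [Fintype ι] [DecidableEq ι]
    (hz : DisjointPairSumsVanish z) (hι : 5 ≤ Fintype.card ι) {i j : ι} (hij : i ≠ j) :
    z i = 0 ∨ z j = 0 := by
  have hcard : 3 ≤ (Finset.univ \ {i, j} : Finset ι).card := by
    rw [Finset.card_sdiff_of_subset (Finset.subset_univ _), Finset.card_univ,
      Finset.card_pair hij]
    omega
  obtain ⟨t, hts, htc⟩ := Finset.exists_subset_card_eq hcard
  obtain ⟨k, l, m, hkl, hkm, hlm, rfl⟩ := Finset.card_eq_three.mp htc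
  simp only [Finset.insert_subset_iff, Finset.singleton_subset_iff, Finset.mem_sdiff,
    Finset.mem_univ, Finset.mem_insert, Finset.mem_singleton, true_and, not_or] at hts
  obtain ⟨⟨hki, hkj⟩, ⟨hli, hlj⟩, ⟨hmi, hmj⟩⟩ := hts
  exact hz.eq_zero_or_eq_zero_of_five hij (Ne.symm hki) (Ne.symm hli) (Ne.symm hmi)
    (Ne.symm hkj) (Ne.symm hlj) (Ne.symm hmj) hkl hkm hlm

end PairSums

section Demicube

variable {d : ℕ}

lemma mem_demicube {x : E d} :
    x ∈ demicube d ↔ ∃ ε : Fin d → Bool, Even (Finset.univ.filter fun i => ε i = true).card ∧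
      WithLp.toLp 2 (fun i => if ε i then -(1 / Real.sqrt d) else 1 / Real.sqrt d) = x := by
  rw [demicube, @Finset.mem_image _ _ (Classical.decEq _)]
  simp only [Finset.mem_filter, Finset.mem_univ, true_and]

def demicubePoint (d : ℕ) (S : Finset (Fin d)) : E d :=
  WithLp.toLp 2 fun i => if i ∈ S then -(1 / Real.sqrt d) else 1 / Real.sqrt d

lemma demicubePoint_mem_demicube {S : Finset (Fin d)} (hS : Even S.card) :
    demicubePoint d S ∈ demicube d := by
  refine mem_demicube.mpr ⟨fun i => decide (i ∈ S), ?_, ?_⟩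
  · simpa using hS
  · ext i
    simp [demicubePoint]

lemma inner_demicubePoint (z : E d) (S : Finset (Fin d)) :
    ⟪z, demicubePoint d S⟫ = ((∑ i, z i) - 2 * ∑ i ∈ S, z i) / Real.sqrt d := by
  have hcoord : ∀ i, (if i ∈ S then -(1 / Real.sqrt d) else 1 / Real.sqrt d) * z i
      = z i / Real.sqrt d - 2 * (if i ∈ S then z i else 0) / Real.sqrt d := by
    intro i
    split_ifs <;> ring
  simp only [demicubePoint, PiLp.inner_apply, RCLike.inner_apply, conj_trivial, hcoord,
    Finset.sum_sub_distrib, ← Finset.sum_div, ← Finset.mul_sum, Finset.sum_ite_mem,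
    Finset.univ_inter]
  ring

lemma apply_eq_or_apply_eq_neg_of_mem_demicube {x : E d} (hx : x ∈ demicube d) (i : Fin d) :
    x i = 1 / Real.sqrt d ∨ x i = -(1 / Real.sqrt d) := by
  obtain ⟨ε, -, rfl⟩ := mem_demicube.mp hx
  by_cases h : ε i <;> simp [h]

lemma exists_evenSums_mem_of_mem_Dm {z : E d} (hz : z ∈ Dm d 2 (demicube d)) :
    ∃ U : Finset ℝ, U.card ≤ 2 ∧ ∀ S : Finset (Fin d), Even S.card → ∑ i ∈ S, z i ∈ U := by
  obtain ⟨-, T, hT, hzT⟩ := hz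
  set A := ∑ i, z i
  refine ⟨T.image fun t => (A - Real.sqrt d * t) / 2, (Finset.card_image_le).trans hT,
    fun S hS => Finset.mem_image.mpr ⟨_, hzT _ (demicubePoint_mem_demicube hS), ?_⟩⟩
  rw [inner_demicubePoint]
  obtain rfl | hd := eq_or_ne d 0
  · simp [A, Finset.eq_empty_of_isEmpty S]
  · field_simp
    ring

lemma mem_crossPolytope_of_norm_eq_one {z : E d} (hz : ‖z‖ = 1)
    (h : ∀ i j, i ≠ j → z i = 0 ∨ z j = 0) : z ∈ crossPolytope d := by
  obtain ⟨i, hi⟩ : ∃ i, z i ≠ 0 := by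
    by_contra! h0
    have : z = 0 := by ext i; simp [h0]
    simp [this] at hz
  have hz_single : z = EuclideanSpace.single i (z i) := by
    ext j
    by_cases hji : j = i
    · subst hji; simp
    · simp [hji, (h j i hji).resolve_right hi]
  rw [hz_single, PiLp.norm_single, Real.norm_eq_abs] at hz
  refine ⟨i, ?_⟩
  rcases (abs_eq zero_le_one).mp hz with h1 | h1
  · left; rw [hz_single, h1]
  · right; rw [hz_single, h1]; exact PiLp.single_neg 2 i

lemma Dm_demicube_subset_crossPolytope (hd : 5 ≤ d) :
    Dm d 2 (demicube d) ⊆ crossPolytope d := by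
  intro z hz
  obtain ⟨U, hU, hzU⟩ := exists_evenSums_mem_of_mem_Dm hz
  have hpairs := disjointPairSumsVanish_of_evenSums hU hzU
  exact mem_crossPolytope_of_norm_eq_one (mem_sphere_zero_iff_norm.mp hz.1)
    fun i j hij => hpairs.eq_zero_or_eq_zero_of_ne (by simpa using hd) hij

lemma crossPolytope_subset_Dm_demicube : crossPolytope d ⊆ Dm d 2 (demicube d) := by
  rintro z ⟨i, rfl | rfl⟩ <;>
    refine ⟨by simp, {1 / Real.sqrt d, -(1 / Real.sqrt d)}, Finset.card_le_two, fun x hx => ?_⟩ <;>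
    rcases apply_eq_or_apply_eq_neg_of_mem_demicube hx i with h | h <;>
    simp [EuclideanSpace.inner_single_left, h]

end Demicube

theorem dual_of_demicube (d : ℕ) (hd : 5 ≤ d) :
    Dm d 2 ↑(demicube d) = crossPolytope d :=
  (Dm_demicube_subset_crossPolytope hd).antisymm crossPolytope_subset_Dm_demicube
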